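/- Let G be a Euclidean (positive definite) metric on 𝐖 = W ⊕ W* admitting a decomposition 𝐖 = W₊ ⊕ W₋ with W₊ maximal g-positive, W₋ maximal g-negative, W₊ ⊥_g W₋, and G|_{W±} = ±2g|_{W±}. Then W± ∩ W = 0, and W± are graphs W± = {(X, (ψ ± γ)♭X) : X ∈ W} where ψ is a 2-form on W and γ is a positive definite symmetric bilinear form on W. Thus generalized metrics correspond bijectively to pairs (γ, ψ). -/

import Mathlib

/-! A subspace of `W ⊕ W*` on which `g` is definite meets `W` and `W*` trivially, since `g`
vanishes on both; if it has dimension `dim W` it is therefore the graph of a map `A : W → W*`.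
For `W₊ = graph A` and `W₋ = graph B`, `g`-orthogonality says `B = -Aᵀ`, and positivity of
`g` on `W₊` says `X ↦ A X X` is positive definite. Then `ψ + γ = A` and `ψ - γ = -Aᵀ` force
`γ` and `ψ` to be the symmetric and skew parts of `A`. -/

open LinearMap

/-- The neutral metric `g((X,α),(Y,μ)) = (α(Y) + μ(X))/2` on `W ⊕ W*`. -/
noncomputable def neutralMetric (W : Type*) [AddCommGroup W] [Module ℝ W] :
    (W × Module.Dual ℝ W) → (W × Module.Dual ℝ W) → ℝ :=
  fun p q => (p.2 q.1 + q.2 p.1) / 2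

theorem LinearMap.graph_injective {R M N : Type*} [Semiring R] [AddCommMonoid M]
    [AddCommMonoid N] [Module R M] [Module R N] :
    Function.Injective (LinearMap.graph : (M →ₗ[R] N) → Submodule R (M × N)) := by
  intro f g h
  ext x
  exact (h ▸ rfl : (x, f x) ∈ g.graph)

theorem Submodule.exists_eq_graph_of_finrank_eq {K V U : Type*} [DivisionRing K]
    [AddCommGroup V] [Module K V] [FiniteDimensional K V] [AddCommGroup U] [Module K U]
    {S : Submodule K (V × U)} (hS : ∀ y : U, ((0 : V), y) ∈ S → y = 0)
    (hdim : Module.finrank K S = Module.finrank K V) :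
    ∃ f : V →ₗ[K] U, S = graph f := by
  let π : S →ₗ[K] V := (LinearMap.fst K V U).comp S.subtype
  have hinj : Function.Injective π := by
    rw [← ker_eq_bot, eq_bot_iff]
    rintro ⟨⟨x, y⟩, hp⟩ hx
    obtain rfl : x = 0 := hx
    simp [hS y hp]
  have : FiniteDimensional K S := Module.Finite.of_injective π hinj
  exact S.exists_eq_graph ⟨hinj, (injective_iff_surjective_of_finrank_eq_finrank hdim).1 hinj⟩

namespace LinearMap

variable {M N : Type*} [AddCommGroup M] [Module ℝ M] [AddCommGroup N] [Module ℝ N]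

noncomputable def symmPart (A : M →ₗ[ℝ] M →ₗ[ℝ] N) : M →ₗ[ℝ] M →ₗ[ℝ] N :=
  (2⁻¹ : ℝ) • (A + A.flip)

noncomputable def skewPart (A : M →ₗ[ℝ] M →ₗ[ℝ] N) : M →ₗ[ℝ] M →ₗ[ℝ] N :=
  (2⁻¹ : ℝ) • (A - A.flip)

variable (A : M →ₗ[ℝ] M →ₗ[ℝ] N)

theorem symmPart_apply (X Y : M) : A.symmPart X Y = (2⁻¹ : ℝ) • (A X Y + A Y X) := by
  simp [symmPart]

theorem skewPart_apply (X Y : M) : A.skewPart X Y = (2⁻¹ : ℝ) • (A X Y - A Y X) := by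
  simp [skewPart]

theorem symmPart_apply_comm (X Y : M) : A.symmPart X Y = A.symmPart Y X := by
  rw [symmPart_apply, symmPart_apply, add_comm]

theorem symmPart_apply_self (X : M) : A.symmPart X X = A X X := by
  rw [symmPart_apply, ← two_smul ℝ, smul_smul, inv_mul_cancel₀ two_ne_zero, one_smul]

theorem skewPart_apply_comm (X Y : M) : A.skewPart X Y = -A.skewPart Y X := by
  rw [skewPart_apply, skewPart_apply, ← smul_neg, neg_sub]

theorem skewPart_add_symmPart : A.skewPart + A.symmPart = A := by
  rw [skewPart, symmPart]; module

theorem skewPart_sub_symmPart : A.skewPart - A.symmPart = -A.flip := by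
  rw [skewPart, symmPart]; module

theorem eq_symmPart_and_eq_skewPart {γ ψ : M →ₗ[ℝ] M →ₗ[ℝ] N} (hadd : ψ + γ = A)
    (hsub : ψ - γ = -A.flip) : γ = A.symmPart ∧ ψ = A.skewPart := by
  have hflip : A.flip = γ - ψ := by rw [← neg_sub ψ γ, hsub, neg_neg]
  rw [symmPart, skewPart, hflip, ← hadd]
  constructor <;> module

end LinearMap

section NeutralMetric

variable {W : Type*} [AddCommGroup W] [Module ℝ W]

theorem neutralMetric_self (p : W × Module.Dual ℝ W) : neutralMetric W p p = p.2 p.1 :=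
  add_self_div_two _

def NeutralAnisotropic (S : Submodule ℝ (W × Module.Dual ℝ W)) : Prop :=
  ∀ p ∈ S, p ≠ 0 → neutralMetric W p p ≠ 0

namespace NeutralAnisotropic

variable {S : Submodule ℝ (W × Module.Dual ℝ W)}

theorem eq_zero (hS : NeutralAnisotropic S) {p : W × Module.Dual ℝ W} (hp : p ∈ S)
    (h : p.2 p.1 = 0) : p = 0 := by
  by_contra hne
  exact hS p hp hne (by rw [neutralMetric_self, h])

theorem fst_eq_zero (hS : NeutralAnisotropic S) {X : W} (hX : (X, 0) ∈ S) : X = 0 :=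
  congrArg Prod.fst (hS.eq_zero hX rfl)

theorem exists_eq_graph [FiniteDimensional ℝ W] (hS : NeutralAnisotropic S)
    (hdim : Module.finrank ℝ S = Module.finrank ℝ W) :
    ∃ A : W →ₗ[ℝ] Module.Dual ℝ W, S = graph A :=
  S.exists_eq_graph_of_finrank_eq
    (fun _ hα ↦ congrArg Prod.snd (hS.eq_zero hα (map_zero _))) hdim

end NeutralAnisotropic

theorem eq_neg_flip_of_neutralMetric_graph_eq_zero {A B : W →ₗ[ℝ] Module.Dual ℝ W}
    (h : ∀ p ∈ graph A, ∀ q ∈ graph B, neutralMetric W p q = 0) : B = -A.flip := by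
  ext Y X
  have hXY : (A X Y + B Y X) / 2 = 0 := h (X, A X) rfl (Y, B Y) rfl
  simp only [LinearMap.neg_apply, flip_apply]
  linarith

end NeutralMetric

theorem generalized_metric_graphs
    (W : Type*) [AddCommGroup W] [Module ℝ W] [FiniteDimensional ℝ W]
    (Wp Wn : Submodule ℝ (W × Module.Dual ℝ W))
    (hdimp : Module.finrank ℝ Wp = Module.finrank ℝ W)
    (hdimn : Module.finrank ℝ Wn = Module.finrank ℝ W)
    (hgpos : ∀ p ∈ Wp, p ≠ 0 → 0 < neutralMetric W p p)
    (hgneg : ∀ p ∈ Wn, p ≠ 0 → neutralMetric W p p < 0)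
    (hgorth : ∀ p ∈ Wp, ∀ q ∈ Wn, neutralMetric W p q = 0) :
    (∀ X : W, ((X, (0 : Module.Dual ℝ W)) ∈ Wp → X = 0) ∧
              ((X, (0 : Module.Dual ℝ W)) ∈ Wn → X = 0)) ∧
    ∃! γψ : (W →ₗ[ℝ] Module.Dual ℝ W) × (W →ₗ[ℝ] Module.Dual ℝ W),
      (∀ X Y : W, γψ.1 X Y = γψ.1 Y X) ∧
      (∀ X : W, X ≠ 0 → 0 < γψ.1 X X) ∧
      (∀ X Y : W, γψ.2 X Y = - γψ.2 Y X) ∧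
      Wp = LinearMap.graph (γψ.2 + γψ.1) ∧
      Wn = LinearMap.graph (γψ.2 - γψ.1) := by
  have hWp : NeutralAnisotropic Wp := fun p hp h0 ↦ (hgpos p hp h0).ne'
  have hWn : NeutralAnisotropic Wn := fun p hp h0 ↦ (hgneg p hp h0).ne
  refine ⟨fun X ↦ ⟨hWp.fst_eq_zero, hWn.fst_eq_zero⟩, ?_⟩
  obtain ⟨A, rfl⟩ := hWp.exists_eq_graph hdimp
  obtain ⟨B, rfl⟩ := hWn.exists_eq_graph hdimn
  obtain rfl : B = -A.flip := eq_neg_flip_of_neutralMetric_graph_eq_zero hgorth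
  refine ⟨(A.symmPart, A.skewPart), ⟨A.symmPart_apply_comm, fun X hX ↦ ?_,
    A.skewPart_apply_comm, by rw [skewPart_add_symmPart], by rw [skewPart_sub_symmPart]⟩, ?_⟩
  · rw [symmPart_apply_self]
    simpa [neutralMetric_self] using hgpos (X, A X) rfl (by simp [hX])
  · rintro ⟨γ, ψ⟩ ⟨-, -, -, hp, hn⟩
    obtain ⟨rfl, rfl⟩ := A.eq_symmPart_and_eq_skewPart (graph_injective hp).symm
      (graph_injective hn).symm
    rfl
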